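/- arXiv:1807.08290 — 7 statements merged into one kernel-verified Lean document; each statement's English description precedes it below -/
import Mathlib

section
/- Let X be a nonempty finite set and B a nonempty family of subsets of X whose elements do not all have the same cardinality. Define av(A) = (Σ_{A∈𝒜}|A|)/|𝒜| for a nonempty family 𝒜. Then there exists x₀ ∈ X such that the family B₀ = {B ∈ B : x₀ ∉ B} is nonempty and av(B) > av(B₀). -/
open Finset
open scoped Classical

/-- The average cardinality of the members of a family of finite sets. -/
noncomputable def avSize {X : Type*} (𝒜 : Finset (Finset X)) : ℝ :=
  (∑ A ∈ 𝒜, (A.card : ℝ)) / 𝒜.card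

theorem exists_elt_decreasing_average {X : Type*} [Fintype X] [Nonempty X]
    (B : Finset (Finset X)) (hB : ∃ A ∈ B, ∃ C ∈ B, A.card ≠ C.card) :
    ∃ x₀ : X, (B.filter fun s => x₀ ∉ s).Nonempty ∧
      avSize B > avSize (B.filter fun s => x₀ ∉ s) := by
  classical
  obtain ⟨A₀, hA₀, C₀, hC₀, hne⟩ := hB
  have hBne : B.Nonempty := ⟨A₀, hA₀⟩
  set n : ℝ := (B.card : ℝ) with hn_def
  set S : ℝ := ∑ A ∈ B, (A.card : ℝ) with hS_def
  have hn : (0:ℝ) < n := by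
    rw [hn_def]; exact_mod_cast Finset.card_pos.2 hBne
  set Q : ℝ := ∑ A ∈ B, (A.card:ℝ)^2 with hQ_def
  -- strict Cauchy-Schwarz
  have key : S * S < n * Q := by
    have h1 : (0:ℝ) < ∑ A ∈ B, ∑ C ∈ B, ((A.card:ℝ) - C.card)^2 := by
      apply Finset.sum_pos'
      · intro A _; exact Finset.sum_nonneg fun C _ => sq_nonneg _
      · refine ⟨A₀, hA₀, Finset.sum_pos' (fun C _ => sq_nonneg _) ⟨C₀, hC₀, ?_⟩⟩
        have h' : (A₀.card:ℝ) - C₀.card ≠ 0 := by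
          have : (A₀.card:ℝ) ≠ (C₀.card:ℝ) := by exact_mod_cast hne
          exact sub_ne_zero.mpr this
        exact lt_of_le_of_ne (sq_nonneg _) (Ne.symm (pow_ne_zero 2 h'))
    have h2 : ∑ A ∈ B, ∑ C ∈ B, ((A.card:ℝ) - C.card)^2
        = 2*(n * Q) - 2*(S*S) := by
      have hinner : ∀ A ∈ B, ∑ C ∈ B, ((A.card:ℝ) - C.card)^2
          = n*(A.card:ℝ)^2 - 2*(A.card:ℝ)*S + Q := by
        intro A _
        have : ∀ C ∈ B, ((A.card:ℝ) - C.card)^2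
            = (A.card:ℝ)^2 - 2*(A.card:ℝ)*(C.card:ℝ) + (C.card:ℝ)^2 := by
          intro C _; ring
        rw [Finset.sum_congr rfl this, Finset.sum_add_distrib, Finset.sum_sub_distrib,
          Finset.sum_const, ← Finset.mul_sum, nsmul_eq_mul, ← hn_def, ← hS_def, ← hQ_def]
      rw [Finset.sum_congr rfl hinner, Finset.sum_add_distrib, Finset.sum_sub_distrib,
        ← Finset.mul_sum, ← Finset.sum_mul, ← Finset.mul_sum, Finset.sum_const, nsmul_eq_mul,
        ← hn_def, ← hS_def, ← hQ_def]
      ring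
    linarith
  -- existence of a good x
  set T : X → ℝ := fun x => ∑ A ∈ B, if x ∈ A then (A.card:ℝ) else 0 with hT_def
  set d : X → ℝ := fun x => ∑ A ∈ B, if x ∈ A then (1:ℝ) else 0 with hd_def
  have hsumT : ∑ x : X, T x = Q := by
    rw [hT_def, hQ_def, Finset.sum_comm]
    refine Finset.sum_congr rfl fun A _ => ?_
    rw [Finset.sum_ite_mem, Finset.univ_inter, Finset.sum_const, nsmul_eq_mul, sq]
  have hsumd : ∑ x : X, d x = S := by
    rw [hd_def, hS_def, Finset.sum_comm]
    refine Finset.sum_congr rfl fun A _ => ?_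
    rw [Finset.sum_ite_mem, Finset.univ_inter, Finset.sum_const, nsmul_eq_mul, mul_one]
  have hex : ∃ x ∈ Finset.univ (α := X), S * d x < n * T x := by
    apply Finset.exists_lt_of_sum_lt
    rw [← Finset.mul_sum, ← Finset.mul_sum, hsumT, hsumd]
    exact key
  obtain ⟨x, -, hx⟩ := hex
  have hdx : d x = ((B.filter fun s => x ∈ s).card : ℝ) := by
    simp [hd_def, Finset.sum_boole]
  have hTx : T x = ∑ A ∈ B.filter fun s => x ∈ s, (A.card:ℝ) := by
    simp [hT_def, Finset.sum_filter]
  set B₀ := B.filter fun s => x ∉ s with hB₀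
  have hcard : ((B.filter fun s => x ∈ s).card : ℝ) + (B₀.card : ℝ) = n := by
    rw [hn_def, hB₀]
    exact_mod_cast congrArg (Nat.cast : ℕ → ℝ)
      (Finset.card_filter_add_card_filter_not (s := B) (p := fun s => x ∈ s))
  have hsum : (∑ A ∈ B.filter fun s => x ∈ s, (A.card:ℝ)) + (∑ A ∈ B₀, (A.card:ℝ)) = S := by
    rw [hS_def, hB₀]
    exact Finset.sum_filter_add_sum_filter_not B _ _
  set S₀ : ℝ := ∑ A ∈ B₀, (A.card:ℝ) with hS₀
  -- B₀ nonempty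
  have hB₀ne : B₀.Nonempty := by
    rw [Finset.nonempty_iff_ne_empty]
    intro hemp
    have hfil : B.filter (fun s => x ∈ s) = B := by
      rw [Finset.filter_eq_self]
      intro A hA
      by_contra hxA
      have : A ∈ B₀ := Finset.mem_filter.mpr ⟨hA, hxA⟩
      simp [hemp] at this
    rw [hdx, hTx, hfil, ← hn_def, ← hS_def, mul_comm] at hx
    exact lt_irrefl _ hx
  have hn₀pos : (0:ℝ) < (B₀.card : ℝ) := by
    exact_mod_cast Finset.card_pos.2 hB₀ne
  refine ⟨x, hB₀ne, ?_⟩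
  have hT' : T x = S - S₀ := by rw [hTx]; linarith
  have hd' : d x = n - (B₀.card : ℝ) := by rw [hdx]; linarith
  rw [hT', hd'] at hx
  show avSize B₀ < avSize B
  unfold avSize
  rw [← hS_def, ← hn_def, ← hS₀, div_lt_div_iff₀ hn₀pos hn]
  nlinarith
end

section
/- For any finite family B of subsets of a finite set X that contains sets of at least two distinct cardinalities, the strict inequality av(B) > (Σ_{x∈X} S(B∩P(X\{x}))) / (Σ_{x∈X} |B∩P(X\{x})|) holds, where S(𝒜) = Σ_{A∈𝒜}|A|; in particular the denominator is nonzero. -/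
open Finset
open scoped Classical

lemma swap_sum {X : Type*} [Fintype X] (B : Finset (Finset X)) (g : Finset X → ℝ) :
    ∑ x : X, ∑ A ∈ B.filter fun s => x ∉ s, g A
      = ∑ A ∈ B, ((Fintype.card X : ℝ) - A.card) * g A := by
  classical
  have h1 : ∀ x : X, ∑ A ∈ B.filter (fun s => x ∉ s), g A
      = ∑ A ∈ B, if x ∉ A then g A else 0 := fun x => (Finset.sum_filter _ _)
  simp only [h1]
  rw [Finset.sum_comm]
  refine Finset.sum_congr rfl fun A hA => ?_
  have : ∑ x : X, (if x ∉ A then g A else 0) = ((Finset.univ.filter fun x => x ∉ A).card : ℝ) * g A := by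
    rw [Finset.sum_ite, Finset.sum_const, Finset.sum_const]
    simp [mul_comm]
  rw [this, Finset.filter_not, Finset.filter_mem_eq_inter, Finset.univ_inter]
  have hcard : (Finset.univ \ A).card = Fintype.card X - A.card := by
    rw [Finset.card_sdiff_of_subset (Finset.subset_univ A), Finset.card_univ]
  rw [hcard]
  rw [Nat.cast_sub (Finset.card_le_univ A)]

lemma cs_aux {ι : Type*} (s : Finset ι) (f : ι → ℝ) :
    (s.card : ℝ) * ∑ i ∈ s, f i ^ 2 - (∑ i ∈ s, f i) ^ 2
      = (1 / 2) * ∑ i ∈ s, ∑ j ∈ s, (f i - f j) ^ 2 := by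
  have h : ∀ i j : ι, (f i - f j) ^ 2 = f i ^ 2 - 2 * (f i * f j) + f j ^ 2 := fun i j => by ring
  simp_rw [h, Finset.sum_add_distrib, Finset.sum_sub_distrib, Finset.sum_const, ← Finset.mul_sum,
    ← Finset.sum_mul, nsmul_eq_mul]
  rw [← Finset.mul_sum]
  ring

theorem averaged_strict_inequality {X : Type*} [Fintype X] [Nonempty X]
    (B : Finset (Finset X)) (hB : ∃ A ∈ B, ∃ C ∈ B, A.card ≠ C.card) :
    (∑ x : X, ((B.filter fun s => x ∉ s).card : ℝ)) ≠ 0 ∧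
      avSize B >
        (∑ x : X, ∑ A ∈ B.filter fun s => x ∉ s, (A.card : ℝ)) /
          (∑ x : X, ((B.filter fun s => x ∉ s).card : ℝ)) := by
  classical
  obtain ⟨A₀, hA₀, C₀, hC₀, hne⟩ := hB
  set n : ℝ := (Fintype.card X : ℝ) with hn
  have hcard_le : ∀ A : Finset X, (A.card : ℝ) ≤ n := fun A => by
    rw [hn]; exact_mod_cast Finset.card_le_univ A
  -- one of A₀, C₀ has card < n
  have hlt : ∃ D ∈ B, (D.card : ℝ) < n := by
    rcases lt_or_ge (A₀.card : ℝ) n with h | h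
    · exact ⟨A₀, hA₀, h⟩
    · refine ⟨C₀, hC₀, ?_⟩
      have hA : (A₀.card : ℝ) = n := le_antisymm (hcard_le A₀) h
      rcases lt_or_eq_of_le (hcard_le C₀) with h' | h'
      · exact h'
      · exact absurd (show C₀.card = A₀.card by exact_mod_cast h'.trans hA.symm) (fun h => hne h.symm)
  -- denominator sums
  have hT : (∑ x : X, ((B.filter fun s => x ∉ s).card : ℝ)) = ∑ A ∈ B, (n - A.card) := by
    have := swap_sum B (fun _ => (1 : ℝ))
    simpa using this
  have hU : (∑ x : X, ∑ A ∈ B.filter fun s => x ∉ s, (A.card : ℝ))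
      = ∑ A ∈ B, (n - A.card) * A.card := swap_sum B (fun A => (A.card : ℝ))
  have hTpos : 0 < ∑ A ∈ B, (n - (A.card : ℝ)) := by
    obtain ⟨D, hD, hDlt⟩ := hlt
    refine Finset.sum_pos' (fun A _ => by linarith [hcard_le A]) ⟨D, hD, by linarith⟩
  have hmpos : 0 < (B.card : ℝ) := by
    have : B.Nonempty := ⟨A₀, hA₀⟩
    exact_mod_cast Finset.card_pos.mpr this
  -- strict Cauchy-Schwarz
  have hCS : ((∑ A ∈ B, (A.card : ℝ)) ^ 2) < (B.card : ℝ) * ∑ A ∈ B, (A.card : ℝ) ^ 2 := by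
    rw [← sub_pos, cs_aux B (fun A => (A.card : ℝ))]
    have hpos : 0 < ∑ i ∈ B, ∑ j ∈ B, ((i.card : ℝ) - j.card) ^ 2 := by
      refine Finset.sum_pos' (fun i _ => Finset.sum_nonneg fun j _ => sq_nonneg _) ?_
      refine ⟨A₀, hA₀, Finset.sum_pos' (fun j _ => sq_nonneg _) ⟨C₀, hC₀, ?_⟩⟩
      have : ((A₀.card : ℝ) - C₀.card) ≠ 0 := by
        intro h
        exact hne (by exact_mod_cast sub_eq_zero.mp h)
      positivity
    positivity
  constructor
  · rw [hT]; exact ne_of_gt hTpos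
  · rw [hT, hU, avSize, gt_iff_lt, div_lt_div_iff₀ hTpos hmpos]
    have expand1 : ∑ A ∈ B, (n - (A.card : ℝ)) = (B.card : ℝ) * n - ∑ A ∈ B, (A.card : ℝ) := by
      rw [Finset.sum_sub_distrib, Finset.sum_const, nsmul_eq_mul]
    have expand2 : ∑ A ∈ B, (n - (A.card : ℝ)) * A.card
        = n * (∑ A ∈ B, (A.card : ℝ)) - ∑ A ∈ B, (A.card : ℝ) ^ 2 := by
      rw [Finset.mul_sum, ← Finset.sum_sub_distrib]
      refine Finset.sum_congr rfl fun A _ => by ring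
    rw [expand1, expand2]
    nlinarith [hCS]
end

section
/- For every graph G with at least one vertex, there exists a vertex v of G such that avi(G - v) < avi(G), where avi denotes the average size of independent vertex sets. -/
open Finset
open scoped Classical

/-- The finite set of independent vertex sets of `G` (including the empty set). -/
noncomputable def indepSets {V : Type*} [Fintype V] (G : SimpleGraph V) : Finset (Finset V) :=
  univ.filter fun s => ∀ u ∈ s, ∀ v ∈ s, ¬ G.Adj u v

/-- `I(G)`: the number of independent vertex sets of `G`. -/
noncomputable def numIndep {V : Type*} [Fintype V] (G : SimpleGraph V) : ℕ :=
  (indepSets G).card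

/-- `T(G)`: the sum of the sizes of all independent vertex sets of `G`. -/
noncomputable def totIndep {V : Type*} [Fintype V] (G : SimpleGraph V) : ℕ :=
  ∑ s ∈ indepSets G, s.card

/-- `avi(G) = T(G)/I(G)`: the average size of an independent vertex set of `G`. -/
noncomputable def avi {V : Type*} [Fintype V] (G : SimpleGraph V) : ℝ :=
  (totIndep G : ℝ) / (numIndep G : ℝ)

/-!
Let `m` be the mean size of an independent set of `G`; the independent sets of `G - v` are those
of `G` avoiding `v`. Double counting the pairs `(v, s)` with `v ∉ s`, and using
`∑ₛ (|s| - m) = 0`,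
`∑ᵥ ∑_{s ∌ v} (|s| - m) = ∑ₛ (n - |s|) (|s| - m) = -∑ₛ (|s| - m)²`,
which is negative because `∅` and a singleton are independent sets of different sizes.
So some `v` has `∑_{s ∌ v} (|s| - m) < 0`, that is `avi (G - v) < m`.
-/

section SetFamily

variable {V : Type*}

noncomputable def meanCard (A : Finset (Finset V)) : ℝ :=
  ((∑ s ∈ A, s.card : ℕ) : ℝ) / #A

theorem sum_sum_filter_notMem [Fintype V] (A : Finset (Finset V)) (f : Finset V → ℝ) :
    ∑ v, ∑ s ∈ A with v ∉ s, f s = ∑ s ∈ A, (Fintype.card V - s.card) * f s := by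
  simp_rw [sum_filter]
  rw [sum_comm]
  refine sum_congr rfl fun s _ => ?_
  rw [← sum_filter, sum_const, nsmul_eq_mul, ← compl_filter, filter_mem_eq_inter, univ_inter,
    card_compl, Nat.cast_sub (card_le_univ s)]

theorem sum_card_sub_meanCard (A : Finset (Finset V)) :
    ∑ s ∈ A, ((s.card : ℝ) - meanCard A) = 0 := by
  rcases A.eq_empty_or_nonempty with rfl | hA
  · simp
  rw [sum_sub_distrib, sum_const, nsmul_eq_mul, meanCard, Nat.cast_sum,
    mul_div_cancel₀ _ (by positivity), sub_self]

theorem meanCard_lt_of_sum_card_sub_neg {A : Finset (Finset V)} {m : ℝ}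
    (h : ∑ s ∈ A, ((s.card : ℝ) - m) < 0) : meanCard A < m := by
  rcases A.eq_empty_or_nonempty with rfl | hA
  · simp at h
  rw [sum_sub_distrib, sum_const, nsmul_eq_mul, sub_neg] at h
  rw [meanCard, Nat.cast_sum, div_lt_iff₀ (by positivity)]
  linarith

theorem exists_meanCard_filter_notMem_lt [Fintype V] {A : Finset (Finset V)} {s t : Finset V}
    (hs : s ∈ A) (ht : t ∈ A) (hst : s.card ≠ t.card) :
    ∃ v, meanCard (A.filter (v ∉ ·)) < meanCard A := by
  set m := meanCard A
  have hspread : 0 < ∑ a ∈ A, ((a.card : ℝ) - m) ^ 2 := by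
    have hne : (s.card : ℝ) - m ≠ 0 ∨ (t.card : ℝ) - m ≠ 0 := by
      by_contra! h
      exact hst (by exact_mod_cast (sub_eq_zero.1 h.1).trans (sub_eq_zero.1 h.2).symm)
    refine sum_pos' (fun _ _ => sq_nonneg _) ?_
    rcases hne with h | h
    exacts [⟨s, hs, by positivity⟩, ⟨t, ht, by positivity⟩]
  have hdeficit : ∑ v, ∑ a ∈ A with v ∉ a, ((a.card : ℝ) - m)
      = -∑ a ∈ A, ((a.card : ℝ) - m) ^ 2 := by
    rw [sum_sum_filter_notMem]
    calc ∑ a ∈ A, (Fintype.card V - a.card) * ((a.card : ℝ) - m)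
        = (Fintype.card V - m) * ∑ a ∈ A, ((a.card : ℝ) - m)
          - ∑ a ∈ A, ((a.card : ℝ) - m) ^ 2 := by
          rw [mul_sum, ← sum_sub_distrib]
          exact sum_congr rfl fun _ _ => by ring
      _ = -∑ a ∈ A, ((a.card : ℝ) - m) ^ 2 := by rw [sum_card_sub_meanCard]; ring
  obtain ⟨v, -, hv⟩ := exists_lt_of_sum_lt <| (hdeficit.trans_lt (neg_neg_of_pos hspread)).trans_eq
    sum_const_zero.symm
  exact ⟨v, meanCard_lt_of_sum_card_sub_neg hv⟩

end SetFamily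

theorem map_indepSets_induce {V : Type*} [Fintype V] (G : SimpleGraph V) (S : Set V)
    [DecidablePred (· ∈ S)] [Fintype S] :
    (indepSets (G.induce S)).map (mapEmbedding (.subtype (· ∈ S))).toEmbedding
      = (indepSets G).filter (fun t => ∀ x ∈ t, x ∈ S) := by
  ext t
  simp only [indepSets, mem_map, mem_filter, mem_univ, true_and, RelEmbedding.coe_toEmbedding,
    mapEmbedding_apply]
  constructor
  · rintro ⟨s, hs, rfl⟩
    simp only [mem_map, Function.Embedding.coe_subtype, forall_exists_index, and_imp,
      forall_apply_eq_imp_iff₂]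
    exact ⟨fun a ha b hb => hs a ha b hb, fun a _ => a.2⟩
  · rintro ⟨ht, htS⟩
    exact ⟨t.subtype (· ∈ S), fun a ha b hb => ht a (mem_subtype.1 ha) b (mem_subtype.1 hb),
      subtype_map_of_mem htS⟩

theorem avi_eq_meanCard {V : Type*} [Fintype V] (G : SimpleGraph V) :
    avi G = meanCard (indepSets G) :=
  rfl

theorem avi_induce_ne {V : Type*} [Fintype V] (G : SimpleGraph V) (v : V) :
    avi (G.induce {u | u ≠ v}) = meanCard ((indepSets G).filter (v ∉ ·)) := by
  have hfilter : ∀ t ∈ indepSets G, (∀ x ∈ t, x ∈ {u | u ≠ v}) ↔ v ∉ t := fun t _ =>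
    ⟨fun h hv => h v hv rfl, fun h x hx hxv => h (hxv ▸ hx)⟩
  rw [avi_eq_meanCard, ← (map_indepSets_induce G _).trans (filter_congr hfilter)]
  simp only [meanCard, sum_map, card_map, RelEmbedding.coe_toEmbedding, mapEmbedding_apply]

theorem exists_vertex_removal_decreasing_avi {V : Type*} [Fintype V] [Nonempty V]
    (G : SimpleGraph V) :
    ∃ v : V, avi (G.induce {u | u ≠ v}) < avi G := by
  obtain ⟨v⟩ := ‹Nonempty V›
  have hempty : ∅ ∈ indepSets G := by simp [indepSets]
  have hsingleton : {v} ∈ indepSets G := by simp [indepSets]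
  obtain ⟨w, hw⟩ := exists_meanCard_filter_notMem_lt hempty hsingleton (by simp)
  exact ⟨w, by rwa [avi_induce_ne, avi_eq_meanCard]⟩
end

section
/- For every graph G on n vertices that is not the complete graph K_n, we have avi(G) > n/(n+1) = avi(K_n). -/
open Finset
open scoped Classical

lemma mem_indepSets {V : Type*} [Fintype V] {G : SimpleGraph V} {s : Finset V} :
    s ∈ indepSets G ↔ ∀ u ∈ s, ∀ v ∈ s, ¬ G.Adj u v := by
  simp [indepSets]

lemma indepSets_top (n : ℕ) : indepSets (⊤ : SimpleGraph (Fin n)) =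
    insert ∅ (univ.image fun v => ({v} : Finset (Fin n))) := by
  ext s
  simp only [mem_indepSets, SimpleGraph.top_adj, not_not, mem_insert, mem_image, mem_univ,
    true_and, not_ne_iff]
  constructor
  · intro h
    rcases s.eq_empty_or_nonempty with h0 | ⟨a, ha⟩
    · exact Or.inl h0
    · refine Or.inr ⟨a, ?_⟩
      ext b
      simp only [mem_singleton]
      constructor
      · rintro rfl; exact ha
      · intro hb; exact h b hb a ha
  · rintro (rfl | ⟨a, rfl⟩) <;> simp

lemma avi_top (n : ℕ) : avi (⊤ : SimpleGraph (Fin n)) = n / (n + 1) := by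
  have hsing : Function.Injective (fun v : Fin n => ({v} : Finset (Fin n))) := by
    intro a b h; simpa using h
  have hne : (∅ : Finset (Fin n)) ∉ univ.image fun v => ({v} : Finset (Fin n)) := by
    simp
  have hI : numIndep (⊤ : SimpleGraph (Fin n)) = n + 1 := by
    rw [numIndep, indepSets_top, card_insert_of_notMem hne,
      card_image_of_injective _ hsing, card_univ, Fintype.card_fin]
  have hT : totIndep (⊤ : SimpleGraph (Fin n)) = n := by
    rw [totIndep, indepSets_top, sum_insert hne, Finset.sum_image (fun a _ b _ h => hsing h)]
    simp
  rw [avi, hI, hT]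
  push_cast
  ring

theorem avi_gt_complete {V : Type*} [Fintype V] (G : SimpleGraph V) (n : ℕ)
    (hn : Fintype.card V = n) (hG : G ≠ ⊤) :
    avi G > n / (n + 1) ∧ (n : ℝ) / (n + 1) = avi (⊤ : SimpleGraph (Fin n)) := by
  refine ⟨?_, (avi_top n).symm⟩
  -- find a non-adjacent pair
  obtain ⟨u, v, huv, hadj⟩ : ∃ u v : V, u ≠ v ∧ ¬ G.Adj u v := by
    by_contra h
    push_neg at h
    apply hG
    ext a b
    simp only [SimpleGraph.top_adj]
    exact ⟨fun hab => G.ne_of_adj hab, fun hab => h a b hab⟩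
  have hempty : (∅ : Finset V) ∈ indepSets G := by simp [mem_indepSets]
  set f : Finset V → ℤ := fun s => (n + 1) * s.card - n with hf
  have hsing : Function.Injective (fun w : V => ({w} : Finset V)) := by
    intro a b h; simpa using h
  -- the auxiliary set
  set A : Finset (Finset V) :=
    insert {u, v} (univ.image fun w => ({w} : Finset V)) with hA
  have hpairnotmem : ({u, v} : Finset V) ∉ univ.image fun w => ({w} : Finset V) := by
    simp only [mem_image, mem_univ, true_and, not_exists]
    intro w hw
    have : ({u, v} : Finset V).card = 1 := by rw [← hw]; simp
    rw [card_insert_of_notMem (by simpa using huv), card_singleton] at this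
    omega
  have hAsub : A ⊆ (indepSets G).erase ∅ := by
    intro s hs
    rw [hA, mem_insert] at hs
    rcases hs with rfl | hs
    · refine mem_erase.mpr ⟨by simp, mem_indepSets.mpr ?_⟩
      intro a ha b hb
      simp only [mem_insert, mem_singleton] at ha hb
      rcases ha with rfl | rfl <;> rcases hb with rfl | rfl
      · exact G.irrefl
      · exact hadj
      · exact fun h => hadj h.symm
      · exact G.irrefl
    · obtain ⟨w, -, rfl⟩ := mem_image.mp hs
      refine mem_erase.mpr ⟨by simp, mem_indepSets.mpr ?_⟩
      intro a ha b hb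
      simp only [mem_singleton] at ha hb
      subst ha; subst hb
      exact G.irrefl
  have hsumA : ∑ s ∈ A, f s = (n + 2) + n := by
    rw [hA, sum_insert hpairnotmem, Finset.sum_image (fun a _ b _ h => hsing h)]
    have h1 : ({u, v} : Finset V).card = 2 := by
      rw [card_insert_of_notMem (by simpa using huv), card_singleton]
    simp only [hf, h1, card_singleton]
    rw [Finset.sum_const, card_univ, hn]
    push_cast
    ring
  have hkey : (0 : ℤ) < (n + 1) * totIndep G - n * numIndep G := by
    have hsum : ∑ s ∈ indepSets G, f s = (n + 1) * totIndep G - n * numIndep G := by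
      simp only [hf, Finset.sum_sub_distrib, ← Finset.mul_sum, Finset.sum_const, totIndep,
        numIndep, nsmul_eq_mul]
      push_cast
      ring
    rw [← hsum, ← Finset.insert_erase hempty, sum_insert (notMem_erase _ _)]
    have hge : ∑ s ∈ A, f s ≤ ∑ s ∈ (indepSets G).erase ∅, f s := by
      refine Finset.sum_le_sum_of_subset_of_nonneg hAsub ?_
      intro s hs _
      have hne : s ≠ ∅ := (mem_erase.mp hs).1
      have hcard : 1 ≤ s.card := Finset.card_pos.mpr (Finset.nonempty_of_ne_empty hne)
      simp only [hf]
      have : (1 : ℤ) ≤ s.card := by exact_mod_cast hcard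
      nlinarith [Int.ofNat_nonneg n]
    have hf0 : f ∅ = -n := by simp [hf]
    rw [hf0]
    have := hsumA ▸ hge
    linarith
  -- conclude
  have hIpos : 0 < (numIndep G : ℝ) := by
    have : 0 < numIndep G := Finset.card_pos.mpr ⟨∅, hempty⟩
    exact_mod_cast this
  rw [avi, gt_iff_lt, div_lt_div_iff₀ (by positivity) hIpos]
  have : (n : ℝ) * numIndep G < (n + 1) * totIndep G := by
    have := hkey
    have h2 : (n : ℝ) * numIndep G < (n + 1) * totIndep G := by
      exact_mod_cast sub_pos.mp hkey
    exact h2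
  linarith
end

section
/- For every graph G on n vertices that is not the edgeless graph E_n, we have avi(G) < n/2 = avi(E_n). -/
open Finset
open scoped Classical

/-!
Double counting gives `T(G) = ∑ᵥ #{S independent | v ∈ S}`. Deleting `v` injects the independent
sets through `v` into those avoiding `v`, so each term is at most `I(G)/2`, whence `avi(G) ≤ n/2`.
For an isolated vertex `v` this is a bijection (inverse: insert `v`), so `avi(E_n) = n/2`. If `uv`
is an edge, the independent set `{u}` avoids `v` but is not in the image, so the term of `v` is strictly
smaller and `avi(G) < n/2`.
-/

namespace SimpleGraph

variable {V : Type*} [Fintype V] (G : SimpleGraph V)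

lemma mem_indepSets {s : Finset V} : s ∈ indepSets G ↔ ∀ u ∈ s, ∀ v ∈ s, ¬ G.Adj u v := by
  simp [indepSets]

variable {G}

lemma erase_mem_indepSets {s : Finset V} (hs : s ∈ indepSets G) (v : V) :
    s.erase v ∈ indepSets G := by
  rw [mem_indepSets] at hs ⊢
  exact fun a ha b hb => hs a (mem_of_mem_erase ha) b (mem_of_mem_erase hb)

lemma insert_mem_indepSets {s : Finset V} (hs : s ∈ indepSets G) {v : V}
    (hv : ∀ u, ¬ G.Adj v u) : insert v s ∈ indepSets G := by
  rw [mem_indepSets] at hs ⊢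
  intro a ha b hb hab
  rcases mem_insert.mp ha with rfl | ha <;> rcases mem_insert.mp hb with rfl | hb
  exacts [hv _ hab, hv _ hab, hv _ hab.symm, hs a ha b hb hab]

variable (G)

lemma numIndep_pos : 0 < numIndep G :=
  card_pos.mpr ⟨∅, by simp [mem_indepSets]⟩

lemma totIndep_eq_sum_card_mem : totIndep G = ∑ v, #{s ∈ indepSets G | v ∈ s} := by
  simp only [totIndep, card_filter]
  rw [sum_comm]
  exact sum_congr rfl fun s _ => by simp

lemma card_mul_numIndep_eq_sum :
    Fintype.card V * numIndep G =
      ∑ v, (#{s ∈ indepSets G | v ∈ s} + #{s ∈ indepSets G | v ∉ s}) := by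
  simp [card_filter_add_card_filter_not, numIndep]

lemma mapsTo_erase_indepSets (v : V) :
    Set.MapsTo (fun s : Finset V => s.erase v) ↑({s ∈ indepSets G | v ∈ s} : Finset (Finset V))
      ↑({s ∈ indepSets G | v ∉ s} : Finset (Finset V)) := fun s hs => by
  rw [mem_coe, mem_filter] at hs ⊢
  exact ⟨erase_mem_indepSets hs.1 v, notMem_erase v s⟩

lemma card_indepSets_mem_le (v : V) :
    #{s ∈ indepSets G | v ∈ s} ≤ #{s ∈ indepSets G | v ∉ s} :=
  card_le_card_of_injOn _ (mapsTo_erase_indepSets G v)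
    ((erase_injOn' v).mono fun _ hs => (mem_filter.mp hs).2)

variable {G}

lemma card_indepSets_mem_lt_of_adj {u v : V} (huv : G.Adj u v) :
    #{s ∈ indepSets G | v ∈ s} < #{s ∈ indepSets G | v ∉ s} := by
  have hu : {u} ∈ ({s ∈ indepSets G | v ∉ s} : Finset (Finset V)) := by
    simp [mem_indepSets, huv.ne']
  have hmaps : Set.MapsTo (fun s : Finset V => s.erase v)
      ↑({s ∈ indepSets G | v ∈ s} : Finset (Finset V))
      ↑(({s ∈ indepSets G | v ∉ s} : Finset (Finset V)).erase {u}) := fun s hs => by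
    refine mem_erase.mpr ⟨fun hsu => ?_, mapsTo_erase_indepSets G v hs⟩
    rw [mem_coe, mem_filter, mem_indepSets] at hs
    exact hs.1 u (mem_of_mem_erase (hsu ▸ mem_singleton_self u)) v hs.2 huv
  exact (card_le_card_of_injOn _ hmaps ((erase_injOn' v).mono fun _ hs => (mem_filter.mp hs).2)
    ).trans_lt (card_erase_lt_of_mem hu)

lemma card_indepSets_mem_eq_of_isolated {v : V} (hv : ∀ u, ¬ G.Adj v u) :
    #{s ∈ indepSets G | v ∈ s} = #{s ∈ indepSets G | v ∉ s} := by
  refine card_nbij' _ (insert v) (mapsTo_erase_indepSets G v) (fun s hs => ?_)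
    (fun s hs => insert_erase (mem_filter.mp hs).2) (fun s hs => erase_insert (mem_filter.mp hs).2)
  rw [mem_coe, mem_filter] at hs ⊢
  exact ⟨insert_mem_indepSets hs.1 hv, mem_insert_self v s⟩

lemma two_mul_totIndep_lt (hG : G ≠ ⊥) : 2 * totIndep G < Fintype.card V * numIndep G := by
  obtain ⟨u, v, huv⟩ := ne_bot_iff_exists_adj.mp hG
  rw [totIndep_eq_sum_card_mem, mul_sum, card_mul_numIndep_eq_sum]
  refine sum_lt_sum (fun w _ => ?_) ⟨v, mem_univ v, ?_⟩
  · linarith [card_indepSets_mem_le G w]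
  · linarith [card_indepSets_mem_lt_of_adj huv]

lemma two_mul_totIndep_bot :
    2 * totIndep (⊥ : SimpleGraph V) = Fintype.card V * numIndep (⊥ : SimpleGraph V) := by
  rw [totIndep_eq_sum_card_mem, mul_sum, card_mul_numIndep_eq_sum]
  refine sum_congr rfl fun v _ => ?_
  rw [card_indepSets_mem_eq_of_isolated fun _ h => h, two_mul]

lemma avi_lt_card_div_two (hG : G ≠ ⊥) : avi G < Fintype.card V / 2 := by
  rw [avi, div_lt_div_iff₀ (mod_cast numIndep_pos G) two_pos, mul_comm]
  exact_mod_cast two_mul_totIndep_lt hG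

lemma avi_bot : avi (⊥ : SimpleGraph V) = Fintype.card V / 2 := by
  rw [avi, div_eq_div_iff (mod_cast (numIndep_pos _).ne') two_ne_zero, mul_comm]
  exact_mod_cast two_mul_totIndep_bot

end SimpleGraph

open SimpleGraph

theorem avi_lt_edgeless {V : Type*} [Fintype V] (G : SimpleGraph V) (n : ℕ)
    (hn : Fintype.card V = n) (hG : G ≠ ⊥) :
    avi G < n / 2 ∧ (n : ℝ) / 2 = avi (⊥ : SimpleGraph (Fin n)) := by
  subst hn
  exact ⟨avi_lt_card_div_two hG, by rw [avi_bot, Fintype.card_fin]⟩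
end

section
/- The average size of independent sets of the path P_n equals avi(P_n) = (5-√5)/10 · n + (3-√5)/5 - (n+2)/(√5·((-φ²)^(n+2) - 1)), where φ = (1+√5)/2. -/
open Finset
open scoped Classical

/-!
Independent sets of `P_n` are the subsets of `{0, …, n-1}` with no two consecutive elements.
Splitting them according to whether they contain the last vertex gives `I(P_{n+2}) = I(P_{n+1}) + I(P_n)`
and `T(P_{n+2}) = T(P_{n+1}) + T(P_n) + I(P_n)`, whence `I(P_n) = F_{n+2}` and
`5 T(P_n) = (n+2) F_n + n F_{n+2}`. The closed form then follows from `F_n = ψ² F_{n+2} - ψ^{n+2}`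
and, since `-φ² = φ / ψ`, from `√5 ((-φ²)^k - 1) = 5 F_k / ψ^k`.
-/

open scoped goldenRatio

noncomputable def pathIndepSets (n : ℕ) : Finset (Finset ℕ) :=
  (range n).powerset.filter fun s => ∀ i ∈ s, i + 1 ∉ s

theorem mem_pathIndepSets {n : ℕ} {s : Finset ℕ} :
    s ∈ pathIndepSets n ↔ (∀ i ∈ s, i < n) ∧ ∀ i ∈ s, i + 1 ∉ s := by
  simp [pathIndepSets, subset_range]

theorem notMem_of_mem_pathIndepSets {n m : ℕ} {s : Finset ℕ} (hs : s ∈ pathIndepSets n)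
    (hm : n ≤ m) : m ∉ s :=
  fun h => (hm.trans_lt ((mem_pathIndepSets.1 hs).1 m h)).false

theorem pathIndepSets_zero : pathIndepSets 0 = {∅} := by
  decide

theorem pathIndepSets_one : pathIndepSets 1 = {∅, {0}} := by
  decide

theorem pathIndepSets_add_two (n : ℕ) :
    pathIndepSets (n + 2) = pathIndepSets (n + 1) ∪ (pathIndepSets n).image (insert (n + 1)) := by
  ext s
  simp only [mem_pathIndepSets, mem_union, mem_image]
  by_cases h : n + 1 ∈ s
  · constructor
    · exact fun _ => Or.inr ⟨s.erase (n + 1), by grind, insert_erase h⟩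
    · grind
  · grind

theorem sum_pathIndepSets_add_two {M : Type*} [AddCommMonoid M] (f : Finset ℕ → M) (n : ℕ) :
    ∑ s ∈ pathIndepSets (n + 2), f s =
      ∑ s ∈ pathIndepSets (n + 1), f s + ∑ s ∈ pathIndepSets n, f (insert (n + 1) s) := by
  have hdisj : Disjoint (pathIndepSets (n + 1)) ((pathIndepSets n).image (insert (n + 1))) := by
    simp only [disjoint_right, mem_image]
    rintro _ ⟨t, -, rfl⟩ ht
    exact notMem_of_mem_pathIndepSets ht le_rfl (mem_insert_self _ _)
  have hinj : Set.InjOn (insert (n + 1)) (pathIndepSets n : Set (Finset ℕ)) :=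
    fun s hs t ht hst => by
      rw [← erase_insert (notMem_of_mem_pathIndepSets hs n.le_succ),
        ← erase_insert (notMem_of_mem_pathIndepSets ht n.le_succ), hst]
  rw [pathIndepSets_add_two, sum_union hdisj, sum_image hinj]

theorem card_pathIndepSets (n : ℕ) : #(pathIndepSets n) = Nat.fib (n + 2) := by
  induction n using Nat.twoStepInduction with
  | zero => simp [pathIndepSets_zero]
  | one => rw [pathIndepSets_one]; rfl
  | more n ih₀ ih₁ =>
    simp only [card_eq_sum_ones, sum_pathIndepSets_add_two] at ih₀ ih₁ ⊢
    rw [ih₀, ih₁, Nat.fib_add_two (n := n + 2), add_comm]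

theorem five_mul_sum_card_pathIndepSets (n : ℕ) :
    5 * ∑ s ∈ pathIndepSets n, #s = (n + 2) * Nat.fib n + n * Nat.fib (n + 2) := by
  induction n using Nat.twoStepInduction with
  | zero => simp [pathIndepSets_zero]
  | one => rw [pathIndepSets_one]; rfl
  | more n ih₀ ih₁ =>
    have hins : ∀ s ∈ pathIndepSets n, #(insert (n + 1) s) = #s + 1 := fun s hs =>
      card_insert_of_notMem (notMem_of_mem_pathIndepSets hs n.le_succ)
    rw [sum_pathIndepSets_add_two, sum_congr rfl hins, sum_add_distrib, ← card_eq_sum_ones,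
      card_pathIndepSets, mul_add, mul_add, ih₀, ih₁]
    simp only [Nat.fib_add_two]
    ring

theorem map_indepSets_pathGraph (n : ℕ) :
    (indepSets (SimpleGraph.pathGraph n)).map (mapEmbedding Fin.valEmbedding).toEmbedding =
      pathIndepSets n := by
  ext t
  simp only [mem_map, indepSets, mem_filter, mem_univ, true_and, mem_pathIndepSets,
    SimpleGraph.pathGraph_adj, RelEmbedding.coe_toEmbedding, mapEmbedding_apply]
  constructor
  · rintro ⟨s, hs, rfl⟩
    simp only [mem_map, Fin.valEmbedding_apply]
    grind
  · rintro ⟨hlt, hsep⟩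
    refine ⟨t.attachFin hlt, fun u hu v hv huv => ?_, map_valEmbedding_attachFin hlt⟩
    rw [mem_attachFin] at hu hv
    grind

theorem numIndep_pathGraph (n : ℕ) : numIndep (SimpleGraph.pathGraph n) = Nat.fib (n + 2) := by
  rw [numIndep, ← card_map, map_indepSets_pathGraph, card_pathIndepSets]

theorem five_mul_totIndep_pathGraph (n : ℕ) :
    5 * totIndep (SimpleGraph.pathGraph n) = (n + 2) * Nat.fib n + n * Nat.fib (n + 2) := by
  rw [totIndep, ← five_mul_sum_card_pathIndepSets, ← map_indepSets_pathGraph, sum_map]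
  simp only [RelEmbedding.coe_toEmbedding, mapEmbedding_apply, card_map]

theorem Real.fib_eq_goldenConj_sq_mul_fib_add_two_sub (n : ℕ) :
    (Nat.fib n : ℝ) = ψ ^ 2 * Nat.fib (n + 2) - ψ ^ (n + 2) := by
  linear_combination Real.goldenConj_mul_fib_succ_add_fib n -
    ψ * Real.goldenConj_mul_fib_succ_add_fib (n + 1) - ψ ^ (n + 1) * Real.goldenConj_sq

theorem Real.sqrt_five_mul_neg_goldenRatio_sq_pow_sub_one (n : ℕ) :
    √5 * ((-φ ^ 2) ^ n - 1) = 5 * Nat.fib n / ψ ^ n := by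
  have hφ : (-φ ^ 2) ^ n * ψ ^ n = φ ^ n := by
    rw [← mul_pow]
    congr 1
    linear_combination -φ * Real.goldenRatio_mul_goldenConj
  rw [eq_div_iff (pow_ne_zero n Real.goldenConj_ne_zero), mul_assoc, sub_mul, hφ, one_mul,
    Real.coe_fib_eq]
  field_simp
  linear_combination (φ ^ n - ψ ^ n) * Real.sq_sqrt (show (0 : ℝ) ≤ 5 by norm_num)

theorem avi_pathGraph_formula (n : ℕ) :
    avi (SimpleGraph.pathGraph n) =
      (5 - Real.sqrt 5) / 10 * n + (3 - Real.sqrt 5) / 5 -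
        (n + 2) / (Real.sqrt 5 * ((-(((1 + Real.sqrt 5) / 2) ^ 2)) ^ (n + 2) - 1)) := by
  have hT : 5 * (totIndep (SimpleGraph.pathGraph n) : ℝ) =
      (n + 2) * Nat.fib n + n * Nat.fib (n + 2) := by
    exact_mod_cast five_mul_totIndep_pathGraph n
  have hF : (Nat.fib (n + 2) : ℝ) ≠ 0 := Nat.cast_ne_zero.2 (Nat.fib_pos.2 (by omega)).ne'
  have hψ : ψ ^ 2 = (3 - √5) / 2 := by rw [Real.goldenConj_sq, Real.goldenConj]; ring
  rw [show (1 + √5) / 2 = φ from rfl, Real.sqrt_five_mul_neg_goldenRatio_sq_pow_sub_one, avi,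
    numIndep_pathGraph]
  rw [Real.fib_eq_goldenConj_sq_mul_fib_add_two_sub, hψ] at hT
  generalize ψ ^ (n + 2) = x at hT ⊢
  field_simp
  linear_combination 10 * hT
end

section
/- For all positive integers n, avi(P_n) ≥ (5-√5)/10 · n + 1/√5 - 1/3, with equality if and only if n = 2. -/
open Finset
open scoped Classical

namespace AviPathAux

def iSeq : ℕ → ℕ
  | 0 => 1
  | 1 => 2
  | n+2 => iSeq (n+1) + iSeq n

def tSeq : ℕ → ℕ
  | 0 => 0
  | 1 => 1
  | n+2 => tSeq (n+1) + tSeq n + iSeq n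

lemma iSeq_pos : ∀ n, 0 < iSeq n
  | 0 => one_pos
  | 1 => two_pos
  | n+2 => by rw [iSeq]; exact Nat.add_pos_left (iSeq_pos (n+1)) _

noncomputable def S (n : ℕ) : Finset (Finset ℕ) :=
  (range n).powerset.filter fun s => ∀ k, ¬(k ∈ s ∧ k+1 ∈ s)

lemma mem_S {n : ℕ} {s : Finset ℕ} :
    s ∈ S n ↔ s ⊆ range n ∧ ∀ k, ¬(k ∈ s ∧ k+1 ∈ s) := by
  simp [S]

lemma S_zero : S 0 = {∅} := by
  ext s
  simp only [mem_S, range_zero, Finset.subset_empty, Finset.mem_singleton]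
  constructor
  · rintro ⟨h, _⟩; exact h
  · rintro rfl; simp

lemma S_one : S 1 = {∅, {0}} := by
  ext s
  simp only [mem_S, range_one, Finset.subset_singleton_iff, Finset.mem_insert,
    Finset.mem_singleton]
  constructor
  · rintro ⟨h, _⟩; exact h
  · rintro (rfl | rfl)
    · simp
    · refine ⟨Or.inr rfl, ?_⟩
      intro k hk
      simp only [Finset.mem_singleton] at hk
      omega

lemma S_step (n : ℕ) :
    S (n+2) = S (n+1) ∪ (S n).image (insert (n+1)) := by
  ext s
  simp only [Finset.mem_union, Finset.mem_image, mem_S]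
  constructor
  · rintro ⟨hsub, hcond⟩
    by_cases h : (n+1) ∈ s
    · right
      refine ⟨s.erase (n+1), ⟨?_, ?_⟩, Finset.insert_erase h⟩
      · intro x hx
        have hx1 := Finset.mem_of_mem_erase hx
        have hx2 := Finset.ne_of_mem_erase hx
        have hx3 : x < n + 2 := Finset.mem_range.mp (hsub hx1)
        have hx4 : x ≠ n := by
          rintro rfl
          exact hcond x ⟨hx1, h⟩
        exact Finset.mem_range.mpr (by omega)
      · intro k hk
        exact hcond k ⟨Finset.mem_of_mem_erase hk.1, Finset.mem_of_mem_erase hk.2⟩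
    · left
      refine ⟨?_, hcond⟩
      intro x hx
      have hx3 : x < n + 2 := Finset.mem_range.mp (hsub hx)
      have : x ≠ n + 1 := by rintro rfl; exact h hx
      exact Finset.mem_range.mpr (by omega)
  · rintro (⟨hsub, hcond⟩ | ⟨u, ⟨husub, hucond⟩, rfl⟩)
    · exact ⟨hsub.trans (Finset.range_subset_range.mpr (by omega)), hcond⟩
    · have hnotmem : (n+1) ∉ u := fun hc => by
        have := Finset.mem_range.mp (husub hc); omega
      constructor
      · intro x hx
        rcases Finset.mem_insert.mp hx with rfl | hxu
        · exact Finset.mem_range.mpr (by omega)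
        · have := Finset.mem_range.mp (husub hxu)
          exact Finset.mem_range.mpr (by omega)
      · rintro k ⟨hk, hk1⟩
        rcases Finset.mem_insert.mp hk with rfl | hku
        · rcases Finset.mem_insert.mp hk1 with h1 | h1
          · omega
          · have := Finset.mem_range.mp (husub h1); omega
        · rcases Finset.mem_insert.mp hk1 with h1 | h1
          · have hkn : k = n := by omega
            subst hkn
            have := Finset.mem_range.mp (husub hku); omega
          · exact hucond k ⟨hku, h1⟩

lemma S_disjoint (n : ℕ) : Disjoint (S (n+1)) ((S n).image (insert (n+1))) := by
  rw [Finset.disjoint_left]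
  rintro s hs hs'
  rcases Finset.mem_image.mp hs' with ⟨u, hu, rfl⟩
  have := (mem_S.mp hs).1 (Finset.mem_insert_self (n+1) u)
  have := Finset.mem_range.mp this
  omega

lemma S_injOn (n : ℕ) : Set.InjOn (insert (n+1)) (S n : Set (Finset ℕ)) := by
  intro u hu v hv h
  have hu' : (n+1) ∉ u := fun hc => by
    have := Finset.mem_range.mp ((mem_S.mp hu).1 hc); omega
  have hv' : (n+1) ∉ v := fun hc => by
    have := Finset.mem_range.mp ((mem_S.mp hv).1 hc); omega
  rw [← Finset.erase_insert hu', ← Finset.erase_insert hv', h]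

lemma card_S : ∀ n, (S n).card = iSeq n
  | 0 => by rw [S_zero]; rfl
  | 1 => by rw [S_one]; rfl
  | n+2 => by
    rw [S_step, Finset.card_union_of_disjoint (S_disjoint n),
      Finset.card_image_of_injOn (S_injOn n), card_S (n+1), card_S n, iSeq]

lemma sum_S : ∀ n, ∑ s ∈ S n, s.card = tSeq n
  | 0 => by rw [S_zero]; rfl
  | 1 => by rw [S_one]; rfl
  | n+2 => by
    rw [S_step, Finset.sum_union (S_disjoint n),
      Finset.sum_image (fun x hx y hy h => S_injOn n hx hy h), sum_S (n+1)]
    have : ∀ u ∈ S n, (insert (n+1) u).card = u.card + 1 := by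
      intro u hu
      have hu' : (n+1) ∉ u := fun hc => by
        have := Finset.mem_range.mp ((mem_S.mp hu).1 hc); omega
      rw [Finset.card_insert_of_notMem hu']
    rw [Finset.sum_congr rfl this, Finset.sum_add_distrib, sum_S n, Finset.sum_const,
      smul_eq_mul, mul_one, card_S n, tSeq]
    ring

lemma mem_indep_iff {n : ℕ} (s : Finset (Fin n)) :
    s ∈ indepSets (SimpleGraph.pathGraph n) ↔ s.image Fin.val ∈ S n := by
  simp only [indepSets, Finset.mem_filter, Finset.mem_univ, true_and, mem_S]
  constructor
  · intro h
    constructor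
    · intro k hk
      rcases Finset.mem_image.mp hk with ⟨u, _, rfl⟩
      exact Finset.mem_range.mpr u.isLt
    · rintro k ⟨hk, hk1⟩
      rcases Finset.mem_image.mp hk with ⟨u, hu, hku⟩
      rcases Finset.mem_image.mp hk1 with ⟨v, hv, hkv⟩
      exact h u hu v hv (SimpleGraph.pathGraph_adj.mpr (Or.inl (by omega)))
  · rintro ⟨_, hcond⟩ u hu v hv hadj
    rcases SimpleGraph.pathGraph_adj.mp hadj with h | h
    · exact hcond u.val ⟨Finset.mem_image_of_mem _ hu, h ▸ Finset.mem_image_of_mem _ hv⟩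
    · exact hcond v.val ⟨Finset.mem_image_of_mem _ hv, h ▸ Finset.mem_image_of_mem _ hu⟩

lemma image_indep (n : ℕ) :
    (indepSets (SimpleGraph.pathGraph n)).image (fun s => s.image Fin.val) = S n := by
  ext u
  simp only [Finset.mem_image]
  constructor
  · rintro ⟨s, hs, rfl⟩
    exact (mem_indep_iff s).mp hs
  · intro hu
    refine ⟨univ.filter (fun i : Fin n => (i : ℕ) ∈ u), ?_, ?_⟩
    · rw [mem_indep_iff]
      have : (univ.filter (fun i : Fin n => (i : ℕ) ∈ u)).image Fin.val = u := by
        ext k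
        simp only [Finset.mem_image, Finset.mem_filter, Finset.mem_univ, true_and]
        constructor
        · rintro ⟨i, hi, rfl⟩; exact hi
        · intro hk
          have hk' : k < n := Finset.mem_range.mp ((mem_S.mp hu).1 hk)
          exact ⟨⟨k, hk'⟩, hk, rfl⟩
      rw [this]; exact hu
    · ext k
      simp only [Finset.mem_image, Finset.mem_filter, Finset.mem_univ, true_and]
      constructor
      · rintro ⟨i, hi, rfl⟩; exact hi
      · intro hk
        have hk' : k < n := Finset.mem_range.mp ((mem_S.mp hu).1 hk)
        exact ⟨⟨k, hk'⟩, hk, rfl⟩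

lemma imageval_injective (n : ℕ) :
    Function.Injective (fun s : Finset (Fin n) => s.image Fin.val) :=
  Finset.image_injective Fin.val_injective

lemma numIndep_path (n : ℕ) : numIndep (SimpleGraph.pathGraph n) = iSeq n := by
  rw [numIndep, ← card_S n, ← image_indep n,
    Finset.card_image_of_injective _ (imageval_injective n)]

lemma totIndep_path (n : ℕ) : totIndep (SimpleGraph.pathGraph n) = tSeq n := by
  rw [totIndep, ← sum_S n, ← image_indep n,
    Finset.sum_image (fun x _ y _ h => imageval_injective n h)]
  refine Finset.sum_congr rfl fun s _ => ?_
  rw [Finset.card_image_of_injective _ Fin.val_injective]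




noncomputable def sq5 : ℝ := Real.sqrt 5
lemma sq5_nonneg : 0 ≤ sq5 := Real.sqrt_nonneg 5
lemma sq5_sq : sq5 ^ 2 = 5 := Real.sq_sqrt (by norm_num)

noncomputable def E (n : ℕ) : ℝ :=
  (tSeq n : ℝ) - ((5 - sq5)/10 * n + sq5/5 - 1/3) * (iSeq n : ℝ)

lemma gpsi : ∀ n : ℕ, (1 + sq5)/2 * (iSeq n : ℝ) - (iSeq (n+1) : ℝ)
    = -(((1 - sq5)/2) ^ (n+2))
  | 0 => by
      norm_num [iSeq]
      linear_combination sq5_sq / 4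
  | n+1 => by
      have h := sq5_sq
      have ih := gpsi n
      have hre : (iSeq (n+2) : ℝ) = iSeq (n+1) + iSeq n := by
        rw [iSeq]; push_cast; ring
      rw [hre]
      have hps : -(((1 - sq5)/2) ^ (n+1+2)) =
          ((1-sq5)/2) * -(((1-sq5)/2)^(n+2)) := by ring
      rw [hps, ← ih]
      linear_combination ((iSeq n : ℝ)/4) * h

lemma E_rec (n : ℕ) :
    E (n+2) = E (n+1) + E n - (5 - sq5)/10 * ((1 - sq5)/2)^(n+2) := by
  have h := sq5_sq
  have hg := gpsi n
  have hi : (iSeq (n+2) : ℝ) = iSeq (n+1) + iSeq n := by rw [iSeq]; push_cast; ring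
  have ht : (tSeq (n+2) : ℝ) = tSeq (n+1) + tSeq n + iSeq n := by
    rw [tSeq]; push_cast; ring
  simp only [E, hi, ht]
  push_cast
  linear_combination (5-sq5)/10 * hg + (iSeq n : ℝ)/20 * h

lemma psi_abs : |(1 - sq5)/2| ≤ 16/25 := by
  rw [abs_le]
  constructor <;> nlinarith [sq5_sq, sq5_nonneg]

lemma psi_pow_le (k : ℕ) : ((1 - sq5)/2)^k ≤ (16/25:ℝ)^k := by
  calc ((1 - sq5)/2)^k ≤ |((1 - sq5)/2)^k| := le_abs_self _
    _ = |(1 - sq5)/2|^k := by rw [abs_pow]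
    _ ≤ (16/25:ℝ)^k := pow_le_pow_left₀ (abs_nonneg _) psi_abs k

lemma E_ge : ∀ n : ℕ, E (n+3) ≥ (16/25:ℝ)^(n+3) ∧ E (n+4) ≥ (16/25:ℝ)^(n+4)
  | 0 => by
      constructor
      · show E 3 ≥ _
        norm_num [E, tSeq, iSeq]
        nlinarith [sq5_sq, sq5_nonneg]
      · show E 4 ≥ _
        norm_num [E, tSeq, iSeq]
        nlinarith [sq5_sq, sq5_nonneg]
  | n+1 => by
      obtain ⟨h3, h4⟩ := E_ge n
      refine ⟨h4, ?_⟩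
      have hrec := E_rec (n+3)
      have hψ := psi_pow_le (n+5)
      have hc0 : (0:ℝ) ≤ (5 - sq5)/10 := by nlinarith [sq5_sq, sq5_nonneg]
      have hc1 : (5 - sq5)/10 ≤ 1/2 := by nlinarith [sq5_nonneg]
      have hP : (0:ℝ) ≤ (16/25:ℝ)^(n+3) := by positivity
      have h45 : ((16:ℝ)/25)^(n+4) = (16/25:ℝ)^(n+3) * (16/25) := by ring
      have h55 : ((16:ℝ)/25)^(n+5) = (16/25:ℝ)^(n+3) * (16/25)^2 := by ring
      have hterm : (5 - sq5)/10 * ((1 - sq5)/2)^(n+3+2) ≤ (1/2) * (16/25:ℝ)^(n+5) := by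
        have h1 : (5 - sq5)/10 * ((1 - sq5)/2)^(n+5) ≤ (5 - sq5)/10 * (16/25:ℝ)^(n+5) :=
          mul_le_mul_of_nonneg_left (psi_pow_le (n+5)) hc0
        have h2 : (5 - sq5)/10 * (16/25:ℝ)^(n+5) ≤ (1/2) * (16/25:ℝ)^(n+5) :=
          mul_le_mul_of_nonneg_right hc1 (by positivity)
        calc (5 - sq5)/10 * ((1 - sq5)/2)^(n+3+2) = (5 - sq5)/10 * ((1 - sq5)/2)^(n+5) := by
              norm_num
          _ ≤ _ := h1.trans h2
      have : E (n+1+4) = E (n+4) + E (n+3) - (5 - sq5)/10 * ((1 - sq5)/2)^(n+3+2) := by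
        convert hrec using 2 <;> omega
      rw [this]
      have hgoal : ((16:ℝ)/25)^(n+1+4) = (16/25:ℝ)^(n+5) := by norm_num
      rw [hgoal, h55] at *
      rw [h45] at h4
      have h3' : E (n+3) ≥ (16/25:ℝ)^(n+3) := h3
      nlinarith [hP]

lemma E_one : 0 < E 1 := by
  norm_num [E, tSeq, iSeq]
  nlinarith [sq5_sq, sq5_nonneg]

lemma E_two : E 2 = 0 := by
  norm_num [E, tSeq, iSeq]
  ring



end AviPathAux

open AviPathAux in
theorem avi_pathGraph_lower_bound (n : ℕ) (hn : 1 ≤ n) :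
    avi (SimpleGraph.pathGraph n) ≥
      (5 - Real.sqrt 5) / 10 * n + 1 / Real.sqrt 5 - 1 / 3 ∧
    (avi (SimpleGraph.pathGraph n) =
        (5 - Real.sqrt 5) / 10 * n + 1 / Real.sqrt 5 - 1 / 3 ↔ n = 2) := by
  have hI := numIndep_path n
  have hT := totIndep_path n
  have hipos : (0:ℝ) < (iSeq n : ℝ) := by exact_mod_cast iSeq_pos n
  have hs5 : Real.sqrt 5 = sq5 := rfl
  have hsq5pos : 0 < sq5 := by nlinarith [sq5_sq, sq5_nonneg]
  have hinv : 1 / Real.sqrt 5 = sq5 / 5 := by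
    rw [hs5, div_eq_div_iff (ne_of_gt hsq5pos) (by norm_num : (5:ℝ) ≠ 0)]
    nlinarith [sq5_sq]
  have hR : (5 - Real.sqrt 5) / 10 * n + 1 / Real.sqrt 5 - 1/3
      = (5 - sq5)/10 * n + sq5/5 - 1/3 := by rw [hinv, hs5]
  have havi : avi (SimpleGraph.pathGraph n) = (tSeq n : ℝ) / (iSeq n : ℝ) := by
    rw [avi, hI, hT]
  have key : avi (SimpleGraph.pathGraph n) - ((5 - sq5)/10 * n + sq5/5 - 1/3)
      = E n / (iSeq n : ℝ) := by
    rw [havi, E]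
    field_simp
  have hEcase : (n = 2 ∧ E n = 0) ∨ (n ≠ 2 ∧ 0 < E n) := by
    match n, hn with
    | 1, _ => exact Or.inr ⟨by norm_num, E_one⟩
    | 2, _ => exact Or.inl ⟨rfl, E_two⟩
    | (m+3), _ =>
      refine Or.inr ⟨by omega, ?_⟩
      have h1 := (E_ge m).1
      have h2 : (0:ℝ) < (16/25:ℝ)^(m+3) := by positivity
      linarith
  have hE0 : 0 ≤ E n := by
    rcases hEcase with ⟨_, h⟩ | ⟨_, h⟩
    · exact le_of_eq h.symm
    · exact h.le
  constructor
  · rw [hR, ge_iff_le, ← sub_nonneg, key]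
    exact div_nonneg hE0 hipos.le
  · rw [hR, ← sub_eq_zero, key]
    constructor
    · intro h
      have hE : E n = 0 := by
        rcases (div_eq_zero_iff.mp h) with h' | h'
        · exact h'
        · exact absurd h' (ne_of_gt hipos)
      rcases hEcase with ⟨h2, _⟩ | ⟨_, hpos⟩
      · exact h2
      · exact absurd hE (ne_of_gt hpos)
    · rintro rfl
      rw [E_two, zero_div]
end
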